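/- Let 1 → G' → G → G'' → 1 be a short exact sequence of group-graphs over a finite tree A (i.e., for each vertex v and each edge e, the sequences 1 → G'_v → G_v → G''_v → 1 and 1 → G'_e → G_e → G''_e → 1 are exact and all squares with restriction maps commute). Assume moreover that every restriction map ρ'{}_v^e : G'_v → G'_e of the subgroup-graph G' is surjective. Then the induced map H^1(p) : H^1(A,G) → H^1(A,G'') of pointed sets is a bijection. -/
import Mathlib


/-!
STATEMENT 1. Let `1 → K → G → G'' → 1` be a short exact sequence of group-graphs over a
finite tree `A` (exact vertex-wise and edge-wise, with all squares commuting), and assume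
every restriction map `K_v → K_e` of the kernel group-graph `K` is surjective.  Then the
induced map `H¹(p) : H¹(A,G) → H¹(A,G'')` of pointed sets is a bijection.
-/

/-- A group-graph over a simple graph `A`: groups attached to vertices (encoded as diagonal
elements of `Sym2 V`) and to edges, with restriction homomorphisms. -/
structure GroupGraph {V : Type} (A : SimpleGraph V) where
  Gc : Sym2 V → Type
  [grp : ∀ x, Group (Gc x)]
  ρ : ∀ (v : V) (e : Sym2 V), e ∈ A.edgeSet → v ∈ e → Gc (Sym2.diag v) →* Gc e

attribute [instance] GroupGraph.grp

namespace GroupGraph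

variable {V : Type} {A : SimpleGraph V}

/-- 0-cochains. -/
def C0 (G : GroupGraph A) : Type := ∀ v : V, G.Gc (Sym2.diag v)

/-- 1-cocycles: families over oriented edges `(v,e)`, `v ∈ e`, with
`g_{v,e} · g_{v',e} = 1` whenever `e = ⟨v,v'⟩`. -/
def Cocycle (G : GroupGraph A) : Type :=
  {c : ∀ (v : V) (e : Sym2 V), e ∈ A.edgeSet → v ∈ e → G.Gc e //
    ∀ v e he hv, c v e he hv * c (Sym2.Mem.other hv) e he (Sym2.other_mem hv) = 1}

/-- The 0-cochain `g` sends the 1-cocycle `c` to `c'`: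
`c'_{v,e} = ρ_v^e(g_v)⁻¹ · c_{v,e} · ρ_{v'}^e(g_{v'})`. -/
def ActsTo (G : GroupGraph A) (g : C0 G) (c c' : Cocycle G) : Prop :=
  ∀ v e (he : e ∈ A.edgeSet) (hv : v ∈ e),
    c'.1 v e he hv =
      (G.ρ v e he hv (g v))⁻¹ * c.1 v e he hv *
        G.ρ (Sym2.Mem.other hv) e he (Sym2.other_mem hv) (g (Sym2.Mem.other hv))

def Rel (G : GroupGraph A) (c c' : Cocycle G) : Prop := ∃ g : C0 G, ActsTo G g c c'

/-- The first cohomology pointed set `H¹(A,G)`. -/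
def H1 (G : GroupGraph A) : Type := Quot (Rel G)

/-- Morphism of group-graphs over (the identity of) `A`. -/
structure Hom (G G' : GroupGraph A) where
  hom : ∀ x : Sym2 V, G.Gc x →* G'.Gc x
  comm : ∀ v e (he : e ∈ A.edgeSet) (hv : v ∈ e) (g : G.Gc (Sym2.diag v)),
    hom e (G.ρ v e he hv g) = G'.ρ v e he hv (hom (Sym2.diag v) g)

/-- Induced map on 1-cocycles. -/
def Hom.mapZ {G G' : GroupGraph A} (f : Hom G G') (c : Cocycle G) : Cocycle G' :=
  ⟨fun v e he hv => f.hom e (c.1 v e he hv), by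
    intro v e he hv
    rw [← map_mul, c.2, map_one]⟩

/-- Induced map `H¹(f) : H¹(A,G) → H¹(A,G')`. -/
def Hom.mapH {G G' : GroupGraph A} (f : Hom G G') : H1 G → H1 G' :=
  Quot.map f.mapZ (by
    rintro c c' ⟨g, hg⟩
    refine ⟨fun v => f.hom (Sym2.diag v) (g v), ?_⟩
    intro v e he hv
    simp only [Hom.mapZ, hg v e he hv, map_mul, map_inv, f.comm])

end GroupGraph

section Aux

open SimpleGraph

private lemma aux_concat_isPath {V : Type} {A : SimpleGraph V} {u v w : V} {p : A.Walk u v}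
    (hp : p.IsPath) (h : A.Adj v w) (hw : w ∉ p.support) : (p.concat h).IsPath := by
  rw [← SimpleGraph.Walk.isPath_reverse_iff, SimpleGraph.Walk.reverse_concat,
    SimpleGraph.Walk.cons_isPath_iff]
  exact ⟨hp.reverse, by simpa using hw⟩

private lemma aux_dist_lt_of_mem_support {V : Type} {A : SimpleGraph V} {r u w : V}
    (p : A.Walk r u) (hw : w ∈ p.support) (hne : w ≠ u) : A.dist r w < p.length := by
  haveI := Classical.decEq V
  have h1 : A.dist r w ≤ (p.takeUntil w hw).length := SimpleGraph.dist_le _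
  have h3 := congrArg SimpleGraph.Walk.length (p.take_spec hw)
  rw [SimpleGraph.Walk.length_append] at h3
  have h4 : (p.dropUntil w hw).length ≠ 0 := fun h0 =>
    hne (SimpleGraph.Walk.eq_of_length_eq_zero h0)
  omega

private lemma aux_adj_dist_ne {V : Type} {A : SimpleGraph V} (hA : A.IsTree) (r : V)
    {u v : V} (h : A.Adj u v) : A.dist r u ≠ A.dist r v := by
  intro heq
  obtain ⟨P, hP, hPl⟩ := hA.isConnected.exists_path_of_dist r u
  obtain ⟨Q, hQ, hQl⟩ := hA.isConnected.exists_path_of_dist r v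
  have hv : v ∉ P.support := by
    intro hvm
    have := aux_dist_lt_of_mem_support P hvm h.ne'
    omega
  have hW : (P.concat h).IsPath := aux_concat_isPath hP h hv
  have heqp := (hA.existsUnique_path r v).unique hW hQ
  have hlen := congrArg SimpleGraph.Walk.length heqp
  rw [SimpleGraph.Walk.length_concat] at hlen
  omega

private lemma aux_exists_parent {V : Type} {A : SimpleGraph V} (hc : A.Connected) (r : V)
    {v : V} (h : 0 < A.dist r v) : ∃ u, A.Adj u v ∧ A.dist r u < A.dist r v := by
  obtain ⟨P, hP, hPl⟩ := hc.exists_path_of_dist r v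
  cases hq : P.reverse with
  | nil =>
    exfalso
    have h0 : P.length = 0 := by
      have := congrArg SimpleGraph.Walk.length hq
      simpa using this
    omega
  | @cons _ x _ had Q =>
    refine ⟨x, had.symm, ?_⟩
    have h1 : A.dist r x ≤ Q.reverse.length := SimpleGraph.dist_le _
    have h2 := congrArg SimpleGraph.Walk.length hq
    rw [SimpleGraph.Walk.length_reverse] at h2
    rw [SimpleGraph.Walk.length_reverse] at h1
    simp only [SimpleGraph.Walk.length_cons] at h2
    omega

private lemma aux_parent_unique {V : Type} {A : SimpleGraph V} (hA : A.IsTree) (r : V)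
    {v u u' : V} (h : A.Adj u v) (h' : A.Adj u' v)
    (hu : A.dist r u < A.dist r v) (hu' : A.dist r u' < A.dist r v) : u = u' := by
  obtain ⟨P, hP, hPl⟩ := hA.isConnected.exists_path_of_dist r u
  obtain ⟨P', hP', hPl'⟩ := hA.isConnected.exists_path_of_dist r u'
  have hv : v ∉ P.support := by
    intro hvm
    have := aux_dist_lt_of_mem_support P hvm h.ne'
    omega
  have hv' : v ∉ P'.support := by
    intro hvm
    have := aux_dist_lt_of_mem_support P' hvm h'.ne'
    omega
  have hW : (P.concat h).IsPath := aux_concat_isPath hP h hv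
  have hW' : (P'.concat h').IsPath := aux_concat_isPath hP' h' hv'
  have heqp := (hA.existsUnique_path r v).unique hW hW'
  obtain ⟨hvv, -⟩ := SimpleGraph.Walk.concat_inj heqp
  exact hvv

private lemma aux_mem_other_eq {α : Type} {e : Sym2 α} {v w : α}
    (hv : v ∈ e) (hw : w ∈ e) (hne : w ≠ v) : Sym2.Mem.other hv = w := by
  have h := Sym2.other_spec hv
  rw [← h] at hw
  rcases Sym2.mem_iff.mp hw with h1 | h1
  · exact absurd h1 hne
  · exact h1.symm

namespace GroupGraph

variable {V : Type} {A : SimpleGraph V} {G : GroupGraph A}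

private lemma cocycle_other (c : Cocycle G) (v : V) (e : Sym2 V)
    (he : e ∈ A.edgeSet) (hv : v ∈ e) :
    c.1 (Sym2.Mem.other hv) e he (Sym2.other_mem hv) = (c.1 v e he hv)⁻¹ := by
  exact eq_inv_of_mul_eq_one_right (c.2 v e he hv)

private lemma rho_congr (G : GroupGraph A) (g : C0 G) {v w : V} (h : v = w)
    (e : Sym2 V) (he : e ∈ A.edgeSet) (hv : v ∈ e) (hw : w ∈ e) :
    G.ρ v e he hv (g v) = G.ρ w e he hw (g w) := by subst h; rfl

private lemma coc_congr (c : Cocycle G) {v w : V} (h : v = w)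
    (e : Sym2 V) (he : e ∈ A.edgeSet) (hv : v ∈ e) (hw : w ∈ e) :
    c.1 v e he hv = c.1 w e he hw := by subst h; rfl

private lemma rel_equivalence : Equivalence (Rel G) := by
  constructor
  · intro c
    exact ⟨fun v => 1, fun v e he hv => by simp⟩
  · rintro c d ⟨g, hg⟩
    refine ⟨fun v => (g v)⁻¹, fun v e he hv => ?_⟩
    rw [hg v e he hv]
    simp only [map_inv, inv_inv]
    group
  · rintro c d f ⟨g, hg⟩ ⟨g', hg'⟩
    refine ⟨fun v => g v * g' v, fun v e he hv => ?_⟩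
    rw [hg' v e he hv, hg v e he hv]
    simp only [map_mul, mul_inv_rev]
    group

end GroupGraph

open GroupGraph in
private lemma statement1_key {V : Type} [Fintype V] {A : SimpleGraph V} (hA : A.IsTree)
    (K G G'' : GroupGraph A) (i : Hom K G) (p : Hom G G'')
    (hex : ∀ (x : Sym2 V), x.IsDiag ∨ x ∈ A.edgeSet →
      ∀ g : G.Gc x, p.hom x g = 1 ↔ g ∈ Set.range (i.hom x))
    (hK : ∀ (v : V) (e : Sym2 V) (he : e ∈ A.edgeSet) (hv : v ∈ e),
      Function.Surjective (K.ρ v e he hv))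
    (c d : Cocycle G)
    (hcd : ∀ (v : V) (e : Sym2 V) (he : e ∈ A.edgeSet) (hv : v ∈ e),
      p.hom e (c.1 v e he hv) = p.hom e (d.1 v e he hv)) :
    Rel G c d := by
  haveI : Nonempty V := hA.isConnected.nonempty
  set r := Classical.arbitrary V with hr
  have pI : ∀ (x : Sym2 V) (hx : x.IsDiag ∨ x ∈ A.edgeSet) (k : K.Gc x),
      p.hom x (i.hom x k) = 1 := fun x hx k => (hex x hx _).mpr ⟨k, rfl⟩
  have step : ∀ (v : V) (e : Sym2 V) (he : e ∈ A.edgeSet) (hv : v ∈ e)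
      (ku : K.Gc (Sym2.diag (Sym2.Mem.other hv))),
      ∃ kv : K.Gc (Sym2.diag v),
        G.ρ v e he hv (i.hom _ kv) =
          c.1 v e he hv *
            G.ρ (Sym2.Mem.other hv) e he (Sym2.other_mem hv) (i.hom _ ku) *
            (d.1 v e he hv)⁻¹ := by
    intro v e he hv ku
    have hpt : p.hom e (c.1 v e he hv *
        G.ρ (Sym2.Mem.other hv) e he (Sym2.other_mem hv) (i.hom _ ku) *
        (d.1 v e he hv)⁻¹) = 1 := by
      rw [← i.comm]
      simp only [map_mul, map_inv]
      rw [pI e (Or.inr he), hcd v e he hv]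
      group
    obtain ⟨κ, hκ⟩ := (hex e (Or.inr he) _).mp hpt
    obtain ⟨kv, hkv⟩ := hK v e he hv κ
    exact ⟨kv, by rw [← i.comm, hkv, hκ]⟩
  have hdist : ∀ v : V, A.dist r v < Fintype.card V := by
    intro v
    obtain ⟨P, hP, hPl⟩ := hA.isConnected.exists_path_of_dist r v
    rw [← hPl]
    exact hP.length_lt
  have main : ∀ n : ℕ, ∃ k : ∀ v : V, A.dist r v < n → K.Gc (Sym2.diag v),
      ∀ (v : V) (h : A.dist r v < n) (e : Sym2 V) (he : e ∈ A.edgeSet) (hv : v ∈ e)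
        (w : V) (hw : w ∈ e) (hwo : Sym2.Mem.other hv = w)
        (hlt : A.dist r w < A.dist r v) (hw2 : A.dist r w < n),
        G.ρ v e he hv (i.hom _ (k v h)) =
          c.1 v e he hv * G.ρ w e he hw (i.hom _ (k w hw2)) * (d.1 v e he hv)⁻¹ := by
    intro n
    induction n with
    | zero =>
      exact ⟨fun v h => absurd h (Nat.not_lt_zero _),
        fun v h => absurd h (Nat.not_lt_zero _)⟩
    | succ n ih =>
      obtain ⟨k, hk⟩ := ih
      have ext : ∀ v : V, A.dist r v = n → ∃ kv : K.Gc (Sym2.diag v),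
          ∀ (e : Sym2 V) (he : e ∈ A.edgeSet) (hv : v ∈ e)
            (w : V) (hw : w ∈ e) (hwo : Sym2.Mem.other hv = w)
            (hlt : A.dist r w < A.dist r v) (hw2 : A.dist r w < n),
            G.ρ v e he hv (i.hom _ kv) =
              c.1 v e he hv * G.ρ w e he hw (i.hom _ (k w hw2)) *
                (d.1 v e he hv)⁻¹ := by
        intro v hveq
        by_cases hpar : ∃ u, A.Adj u v ∧ A.dist r u < A.dist r v
        · obtain ⟨u, hadj, hult⟩ := hpar
          have he0 : s(v, u) ∈ A.edgeSet := by
            rw [SimpleGraph.mem_edgeSet]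
            exact hadj.symm
          have hv0 : v ∈ s(v, u) := Sym2.mem_mk_left v u
          have hother0 : Sym2.Mem.other hv0 = u :=
            aux_mem_other_eq hv0 (Sym2.mem_mk_right v u) hadj.ne
          have hwp : A.dist r (Sym2.Mem.other hv0) < n := by
            rw [hother0]
            omega
          obtain ⟨kv, hkv⟩ := step v s(v, u) he0 hv0 (k _ hwp)
          refine ⟨kv, ?_⟩
          intro e he hv w hw hwo hlt hw2
          subst hwo
          have hadjvw : A.Adj v (Sym2.Mem.other hv) := by
            have hmem : s(v, Sym2.Mem.other hv) ∈ A.edgeSet := by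
              rw [Sym2.other_spec hv]
              exact he
            exact (SimpleGraph.mem_edgeSet A).mp hmem
          have huniq : Sym2.Mem.other hv = u :=
            aux_parent_unique hA r hadjvw.symm hadj hlt hult
          have he' : e = s(v, u) := by
            rw [← Sym2.other_spec hv, huniq]
          subst he'
          exact hkv
        · refine ⟨1, ?_⟩
          intro e he hv w hw hwo hlt hw2
          subst hwo
          have hadjvw : A.Adj v (Sym2.Mem.other hv) := by
            have hmem : s(v, Sym2.Mem.other hv) ∈ A.edgeSet := by
              rw [Sym2.other_spec hv]
              exact he
            exact (SimpleGraph.mem_edgeSet A).mp hmem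
          exact absurd ⟨Sym2.Mem.other hv, hadjvw.symm, hlt⟩ hpar
      choose kx hkx using ext
      refine ⟨fun v h => if h' : A.dist r v < n then k v h' else kx v (by omega), ?_⟩
      intro v h e he hv w hw hwo hlt hw2
      by_cases h' : A.dist r v < n
      · have hlt' : A.dist r w < n := lt_trans hlt h'
        simp only [dif_pos h', dif_pos hlt']
        exact hk v h' e he hv w hw hwo hlt hlt'
      · have hveq : A.dist r v = n := by omega
        have hlt2 : A.dist r w < n := by omega
        simp only [dif_neg h', dif_pos hlt2]
        exact hkx v hveq e he hv w hw hwo hlt hlt2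
  obtain ⟨k, hk⟩ := main (Fintype.card V)
  refine ⟨fun v => i.hom _ (k v (hdist v)), ?_⟩
  intro v e he hv
  beta_reduce
  have hadjvw : A.Adj v (Sym2.Mem.other hv) := by
    have hmem : s(v, Sym2.Mem.other hv) ∈ A.edgeSet := by
      rw [Sym2.other_spec hv]
      exact he
    exact (SimpleGraph.mem_edgeSet A).mp hmem
  rcases (aux_adj_dist_ne hA r hadjvw.symm).lt_or_gt with hcase | hcase
  · -- dist r (other hv) < dist r v : v is the child
    have h1 := hk v (hdist v) e he hv (Sym2.Mem.other hv) (Sym2.other_mem hv) rfl hcase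
      (hdist _)
    rw [h1]
    group
  · -- dist r v < dist r (other hv) : other is the child
    have hinv : Sym2.Mem.other (Sym2.other_mem hv) = v :=
      Sym2.other_invol hv (Sym2.other_mem hv)
    have h2 := hk (Sym2.Mem.other hv) (hdist _) e he (Sym2.other_mem hv) v hv hinv hcase
      (hdist v)
    rw [cocycle_other c v e he hv, cocycle_other d v e he hv] at h2
    rw [h2]
    group


open GroupGraph in
theorem statement1 {V : Type} [Fintype V] {A : SimpleGraph V} (hA : A.IsTree)
    (K G G'' : GroupGraph A) (i : Hom K G) (p : Hom G G'')
    -- `i` is injective (vertex-wise and edge-wise):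
    (hi : ∀ (x : Sym2 V), x.IsDiag ∨ x ∈ A.edgeSet → Function.Injective (i.hom x))
    -- `p` is surjective (vertex-wise and edge-wise):
    (hp : ∀ (x : Sym2 V), x.IsDiag ∨ x ∈ A.edgeSet → Function.Surjective (p.hom x))
    -- exactness at the middle: `ker p = im i` (vertex-wise and edge-wise):
    (hex : ∀ (x : Sym2 V), x.IsDiag ∨ x ∈ A.edgeSet →
      ∀ g : G.Gc x, p.hom x g = 1 ↔ g ∈ Set.range (i.hom x))
    -- all restriction maps of the kernel group-graph `K` are surjective:
    (hK : ∀ (v : V) (e : Sym2 V) (he : e ∈ A.edgeSet) (hv : v ∈ e),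
      Function.Surjective (K.ρ v e he hv)) :
    Function.Bijective p.mapH := by
  classical
  constructor
  · -- injectivity
    intro x y hxy
    obtain ⟨cx, rfl⟩ := Quot.exists_rep x
    obtain ⟨cy, rfl⟩ := Quot.exists_rep y
    have hxy' : Quot.mk (Rel G'') (p.mapZ cx) = Quot.mk (Rel G'') (p.mapZ cy) := hxy
    have hrel'' : Rel G'' (p.mapZ cx) (p.mapZ cy) :=
      (rel_equivalence.eqvGen_iff).mp (Quot.eqvGen_exact hxy')
    obtain ⟨g'', hg''⟩ := hrel''
    have hlift : ∀ v : V, ∃ gv : G.Gc (Sym2.diag v), p.hom _ gv = g'' v :=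
      fun v => hp _ (Or.inl (Sym2.diag_isDiag v)) _
    choose g hg using hlift
    have hc2 : ∀ (v : V) (e : Sym2 V) (he : e ∈ A.edgeSet) (hv : v ∈ e),
        ((G.ρ v e he hv (g v))⁻¹ * cx.1 v e he hv *
          G.ρ (Sym2.Mem.other hv) e he (Sym2.other_mem hv) (g (Sym2.Mem.other hv))) *
        ((G.ρ (Sym2.Mem.other hv) e he (Sym2.other_mem hv) (g (Sym2.Mem.other hv)))⁻¹ *
          cx.1 (Sym2.Mem.other hv) e he (Sym2.other_mem hv) *
          G.ρ (Sym2.Mem.other (Sym2.other_mem hv)) e he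
            (Sym2.other_mem (Sym2.other_mem hv)) (g (Sym2.Mem.other (Sym2.other_mem hv)))) =
          1 := by
      intro v e he hv
      have hinv : Sym2.Mem.other (Sym2.other_mem hv) = v :=
        Sym2.other_invol hv (Sym2.other_mem hv)
      have hda := rho_congr G g hinv e he (Sym2.other_mem (Sym2.other_mem hv)) hv
      rw [hda, cocycle_other cx v e he hv]
      group
    set c2 : Cocycle G :=
      ⟨fun v e he hv => (G.ρ v e he hv (g v))⁻¹ * cx.1 v e he hv *
          G.ρ (Sym2.Mem.other hv) e he (Sym2.other_mem hv) (g (Sym2.Mem.other hv)),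
        fun v e he hv => hc2 v e he hv⟩ with hc2def
    have h12 : Rel G cx c2 := ⟨g, fun v e he hv => rfl⟩
    have h23 : Rel G c2 cy := by
      apply statement1_key hA K G G'' i p hex hK
      intro v e he hv
      have h := hg'' v e he hv
      simp only [Hom.mapZ] at h
      show p.hom e ((G.ρ v e he hv (g v))⁻¹ * cx.1 v e he hv *
          G.ρ (Sym2.Mem.other hv) e he (Sym2.other_mem hv) (g (Sym2.Mem.other hv))) = _
      rw [map_mul, map_mul, map_inv, p.comm, p.comm, hg, hg, ← h]
    exact Quot.sound (rel_equivalence.trans h12 h23)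
  · -- surjectivity
    intro x
    obtain ⟨c'', rfl⟩ := Quot.exists_rep x
    have hsel : ∀ (e : Sym2 V) (he : e ∈ A.edgeSet),
        ∃ z : G.Gc e, p.hom e z = c''.1 e.out.1 e he (Sym2.out_fst_mem e) :=
      fun e he => hp e (Or.inr he) _
    choose lf hlf using hsel
    have hcoc : ∀ (v : V) (e : Sym2 V) (he : e ∈ A.edgeSet) (hv : v ∈ e),
        (if v = e.out.1 then lf e he else (lf e he)⁻¹) *
        (if Sym2.Mem.other hv = e.out.1 then lf e he else (lf e he)⁻¹) = 1 := by
      intro v e he hv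
      by_cases hve : v = e.out.1
      · have hne : Sym2.Mem.other hv ≠ e.out.1 := by
          rw [← hve]
          exact Sym2.other_ne (A.not_isDiag_of_mem_edgeSet he) hv
        rw [if_pos hve, if_neg hne, mul_inv_cancel]
      · have hoe : Sym2.Mem.other hv = e.out.1 :=
          aux_mem_other_eq hv (Sym2.out_fst_mem e) (fun h => hve h.symm)
        rw [if_neg hve, if_pos hoe, inv_mul_cancel]
    refine ⟨Quot.mk _ ⟨fun v e he hv => if v = e.out.1 then lf e he else (lf e he)⁻¹,
      fun v e he hv => hcoc v e he hv⟩, ?_⟩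
    show Quot.mk (Rel G'') _ = _
    congr 1
    apply Subtype.ext
    funext v e he hv
    show p.hom e (if v = e.out.1 then lf e he else (lf e he)⁻¹) = c''.1 v e he hv
    by_cases hve : v = e.out.1
    · subst hve
      rw [if_pos rfl]
      exact hlf e he
    · rw [if_neg hve, map_inv, hlf e he]
      have hov : Sym2.Mem.other (Sym2.out_fst_mem e) = v :=
        aux_mem_other_eq (Sym2.out_fst_mem e) hv hve
      rw [← coc_congr c'' hov e he (Sym2.other_mem (Sym2.out_fst_mem e)) hv]
      exact (cocycle_other c'' e.out.1 e he (Sym2.out_fst_mem e)).symm
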